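/- arXiv:1311.3364 — 3 statements merged into one kernel-verified Lean document; each statement's English description precedes it below -/
import Mathlib

section
/- Let G be a finite group and ρ a linear representation of G on a finite-dimensional real (or complex) normed vector space X. Let s(t), t = 0,1,2,..., be a sequence of vectors of convex weights on G, let E_t = ∑_{g∈G} s_g(t)·ρ(g), and let E_{t,0} = E_{t-1}∘⋯∘E_1∘E_0 denote the cumulative evolution map (with E_{0,0} = id). Fix x ∈ X and define F̄ = (1/|G|) ∑_{g∈G} ρ(g). Then the following are equivalent: (i) lim_{t→∞} ‖ρ(g)(E_{t,0}(x)) − E_{t,0}(x)‖ = 0 for every g ∈ G (asymptotic symmetrization at x); (ii) lim_{t→∞} E_{t,0}(x) = F̄(x). -/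
/-!
The symmetrizing map `F̄` absorbs every `ρ g` on either side, hence every convex combination
of them, so `F̄ (E t x) = F̄ x` for all `t`. Since `y - F̄ y` is the average of the defects
`y - ρ g y`, convergence of `E t x` to `F̄ x` is the same as the defects of `E t x` tending to `0`.
-/

/-- A vector of convex weights on a finite type: nonnegative entries summing to 1. -/
def IsConvexWeights {G : Type*} [Fintype G] (s : G → ℝ) : Prop :=
  (∀ g, 0 ≤ s g) ∧ ∑ g, s g = 1

open Filter Topology

namespace Representation

section Field

variable {k G V : Type*} [Field k] [Group G] [Fintype G] [AddCommGroup V] [Module k V]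
  (ρ : Representation k G V)

noncomputable def symmetrizingMap : Module.End k V :=
  (Fintype.card G : k)⁻¹ • ∑ g, ρ g

theorem symmetrizingMap_mul (g : G) : ρ.symmetrizingMap * ρ g = ρ.symmetrizingMap := by
  rw [symmetrizingMap, smul_mul_assoc, Finset.sum_mul]
  congr 1
  exact Fintype.sum_equiv (Equiv.mulRight g) _ _ fun h => (map_mul ρ h g).symm

theorem mul_symmetrizingMap (g : G) : ρ g * ρ.symmetrizingMap = ρ.symmetrizingMap := by
  rw [symmetrizingMap, mul_smul_comm, Finset.mul_sum]
  congr 1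
  exact Fintype.sum_equiv (Equiv.mulLeft g) _ _ fun h => (map_mul ρ g h).symm

theorem symmetrizingMap_mul_sum_smul {s : G → k} (hs : ∑ g, s g = 1) :
    ρ.symmetrizingMap * ∑ g, s g • ρ g = ρ.symmetrizingMap := by
  simp only [Finset.mul_sum, mul_smul_comm, symmetrizingMap_mul, ← Finset.sum_smul, hs, one_smul]

theorem symmetrizingMap_mul_of_recursion {s : ℕ → G → k} (hs : ∀ t, ∑ g, s t g = 1)
    {E : ℕ → V →ₗ[k] V} (hE0 : E 0 = LinearMap.id)
    (hE : ∀ t, E (t + 1) = (∑ g, s t g • (ρ g : V →ₗ[k] V)) ∘ₗ E t) (t : ℕ) :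
    ρ.symmetrizingMap * E t = ρ.symmetrizingMap := by
  induction t with
  | zero => rw [hE0]; exact mul_one _
  | succ t ih =>
    rw [hE, ← Module.End.mul_eq_comp, ← mul_assoc, ρ.symmetrizingMap_mul_sum_smul (hs t), ih]

theorem sub_symmetrizingMap_apply [CharZero k] (y : V) :
    y - ρ.symmetrizingMap y = (Fintype.card G : k)⁻¹ • ∑ g, (y - ρ g y) := by
  have hcard : (Fintype.card G : k) ≠ 0 := Nat.cast_ne_zero.mpr Fintype.card_ne_zero
  rw [Finset.sum_sub_distrib, Finset.sum_const, Finset.card_univ, ← Nat.cast_smul_eq_nsmul k,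
    smul_sub, smul_smul, inv_mul_cancel₀ hcard, one_smul, symmetrizingMap,
    LinearMap.smul_apply, LinearMap.sum_apply]

end Field

section Normed

variable {G X : Type*} [Group G] [Fintype G] [NormedAddCommGroup X] [NormedSpace ℝ X]
  (ρ : Representation ℝ G X)

theorem norm_sub_symmetrizingMap_apply_le (y : X) :
    ‖y - ρ.symmetrizingMap y‖ ≤ (Fintype.card G : ℝ)⁻¹ * ∑ g, ‖ρ g y - y‖ := by
  rw [sub_symmetrizingMap_apply, norm_smul, norm_inv, Real.norm_natCast]
  gcongr
  calc ‖∑ g, (y - ρ g y)‖ ≤ ∑ g, ‖y - ρ g y‖ := norm_sum_le _ _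
    _ = ∑ g, ‖ρ g y - y‖ := by simp only [norm_sub_rev]

theorem tendsto_sub_symmetrizingMap_apply {ι : Type*} {l : Filter ι} {y : ι → X}
    (hy : ∀ g, Tendsto (fun i => ‖ρ g (y i) - y i‖) l (𝓝 0)) :
    Tendsto (fun i => y i - ρ.symmetrizingMap (y i)) l (𝓝 0) := by
  have hbound : Tendsto (fun i => (Fintype.card G : ℝ)⁻¹ * ∑ g, ‖ρ g (y i) - y i‖) l (𝓝 0) := by
    simpa using (tendsto_finsetSum Finset.univ fun g _ => hy g).const_mul _
  exact squeeze_zero_norm (fun i => ρ.norm_sub_symmetrizingMap_apply_le (y i)) hbound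

theorem tendsto_norm_apply_sub_of_tendsto_symmetrizingMap {ι : Type*} {l : Filter ι} {y : ι → X}
    {x : X} (hy : Tendsto y l (𝓝 (ρ.symmetrizingMap x))) {g : G} (hg : Continuous (ρ g)) :
    Tendsto (fun i => ‖ρ g (y i) - y i‖) l (𝓝 0) := by
  have hfix : ρ g (ρ.symmetrizingMap x) = ρ.symmetrizingMap x :=
    LinearMap.congr_fun (ρ.mul_symmetrizingMap g) x
  simpa [hfix] using (((hg.tendsto _).comp hy).sub hy).norm

end Normed

end Representation

theorem symmetrization_iff_convergence_to_symmetrizing_map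
    {G : Type*} [Group G] [Fintype G]
    {X : Type*} [NormedAddCommGroup X] [NormedSpace ℝ X] [FiniteDimensional ℝ X]
    (ρ : Representation ℝ G X)
    (s : ℕ → G → ℝ) (hs : ∀ t, IsConvexWeights (s t))
    (E : ℕ → X →ₗ[ℝ] X)
    (hE0 : E 0 = LinearMap.id)
    (hE : ∀ t, E (t + 1) = (∑ g, s t g • (ρ g : X →ₗ[ℝ] X)) ∘ₗ E t)
    (x : X) :
    (∀ g : G, Filter.Tendsto (fun t => ‖ρ g (E t x) - E t x‖) Filter.atTop (nhds 0))
      ↔ Filter.Tendsto (fun t => E t x) Filter.atTop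
          (nhds (((Fintype.card G : ℝ)⁻¹ • ∑ g, (ρ g : X →ₗ[ℝ] X)) x)) := by
  change _ ↔ Tendsto (fun t => E t x) atTop (𝓝 (ρ.symmetrizingMap x))
  have hinv (t : ℕ) : ρ.symmetrizingMap (E t x) = ρ.symmetrizingMap x :=
    LinearMap.congr_fun (ρ.symmetrizingMap_mul_of_recursion (fun t => (hs t).2) hE0 hE t) x
  constructor
  · intro hsym
    rw [← tendsto_sub_nhds_zero_iff]
    simpa only [hinv] using ρ.tendsto_sub_symmetrizingMap_apply hsym
  · exact fun hlim g => ρ.tendsto_norm_apply_sub_of_tendsto_symmetrizingMap hlim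
      (LinearMap.continuous_of_finiteDimensional _)
end

section
/- Let G be a finite group, T a positive integer, and 0 < δ ≤ 1/|G|. Let s(t), t = 0,1,2,..., be vectors of convex weights on G and define the evolution p(t+1) = s(t) ∗ p(t) starting from an arbitrary vector of convex weights p(0), where ∗ denotes convolution. For each t let q(t,T) denote the composite convex weight vector such that the evolution from time t to t+T is convolution by q(t,T) (i.e., q(t,T) = s(t+T−1) ∗ ⋯ ∗ s(t+1) ∗ s(t)). Assume q(t,T)(g) ≥ δ for all g ∈ G and all t. Then for every integer k ≥ 0 and every g ∈ G: 1/|G| − (1/|G|)·(1 − |G|δ)^k ≤ p(kT)(g) ≤ 1/|G| + ((|G|−1)/|G|)·(1 − |G|δ)^k. -/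
/-- Group convolution of weight vectors: `(q ∗ p)(g) = ∑ h, q(h) p(h⁻¹ g)`. -/
def groupConv {G : Type*} [Group G] [Fintype G] (q p : G → ℝ) : G → ℝ :=
  fun g => ∑ h : G, q h * p (h⁻¹ * g)

/-- The composite weights describing the evolution from time `t` to `t + T`:
`compWeights s t T = s(t+T−1) ∗ ⋯ ∗ s(t+1) ∗ s(t)` (the empty composite, `T = 0`,
is the delta distribution at the identity). -/
def compWeights {G : Type*} [Group G] [Fintype G] [DecidableEq G]
    (s : ℕ → G → ℝ) (t : ℕ) : ℕ → G → ℝ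
  | 0 => fun g => if g = 1 then 1 else 0
  | T + 1 => groupConv (s (t + T)) (compWeights s t T)

section ConvexWeights

variable {G : Type*} [Fintype G]

lemma IsConvexWeights.le_one {p : G → ℝ} (hp : IsConvexWeights p) (g : G) : p g ≤ 1 :=
  hp.2 ▸ Finset.single_le_sum (fun h _ => hp.1 h) (Finset.mem_univ g)

lemma sum_sub_const_of_sum_eq_one {q : G → ℝ} (hq : ∑ h, q h = 1) (δ : ℝ) :
    ∑ h : G, (q h - δ) = 1 - Fintype.card G * δ := by
  rw [Finset.sum_sub_distrib, hq, Finset.sum_const, Finset.card_univ, nsmul_eq_mul]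

end ConvexWeights

section GroupConv

variable {G : Type*} [Group G] [Fintype G]

lemma sum_apply_mul_left (p : G → ℝ) (h : G) : ∑ g, p (h * g) = ∑ g, p g :=
  Equiv.sum_comp (Equiv.mulLeft h) p

lemma sum_apply_inv_mul (p : G → ℝ) (g : G) : ∑ h : G, p (h⁻¹ * g) = ∑ h, p h :=
  Equiv.sum_comp ((Equiv.inv G).trans (Equiv.mulRight g)) p

lemma IsConvexWeights.groupConv {q p : G → ℝ} (hq : IsConvexWeights q)
    (hp : IsConvexWeights p) : IsConvexWeights (_root_.groupConv q p) := by
  refine ⟨fun g => Finset.sum_nonneg fun h _ => mul_nonneg (hq.1 h) (hp.1 _), ?_⟩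
  calc ∑ g, _root_.groupConv q p g = ∑ h : G, q h * ∑ g, p (h⁻¹ * g) := by
        simp only [_root_.groupConv, Finset.mul_sum]
        exact Finset.sum_comm
    _ = 1 := by simp only [sum_apply_mul_left, hp.2, mul_one, hq.2]

lemma groupConv_assoc (a b c : G → ℝ) :
    groupConv a (groupConv b c) = groupConv (groupConv a b) c := by
  funext g
  simp only [groupConv]
  calc ∑ h : G, a h * ∑ x : G, b x * c (x⁻¹ * (h⁻¹ * g))
      = ∑ h : G, ∑ y : G, a h * (b (h⁻¹ * y) * c (y⁻¹ * g)) := by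
        refine Finset.sum_congr rfl fun h _ => ?_
        rw [← Finset.mul_sum,
          ← Equiv.sum_comp (Equiv.mulLeft h) (fun y => b (h⁻¹ * y) * c (y⁻¹ * g))]
        simp [mul_assoc]
    _ = ∑ y : G, ∑ h : G, a h * (b (h⁻¹ * y) * c (y⁻¹ * g)) := Finset.sum_comm
    _ = ∑ y : G, (∑ h : G, a h * b (h⁻¹ * y)) * c (y⁻¹ * g) := by
        simp only [Finset.sum_mul, mul_assoc]

lemma groupConv_eq_add_sum_sub_mul {q p : G → ℝ} (hp : ∑ g, p g = 1) (δ : ℝ) (g : G) :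
    groupConv q p g = δ + ∑ h : G, (q h - δ) * p (h⁻¹ * g) := by
  calc groupConv q p g = δ * ∑ h : G, p (h⁻¹ * g) + ∑ h : G, (q h - δ) * p (h⁻¹ * g) := by
        rw [Finset.mul_sum, ← Finset.sum_add_distrib]
        exact Finset.sum_congr rfl fun h _ => by ring
    _ = δ + ∑ h : G, (q h - δ) * p (h⁻¹ * g) := by rw [sum_apply_inv_mul, hp, mul_one]

variable {q p : G → ℝ} {δ : ℝ}

lemma le_groupConv_of_le {m : ℝ} (hq : ∑ h, q h = 1) (hqδ : ∀ h, δ ≤ q h)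
    (hp : ∑ g, p g = 1) (hm : ∀ g, m ≤ p g) (g : G) :
    δ + (1 - Fintype.card G * δ) * m ≤ groupConv q p g := by
  rw [groupConv_eq_add_sum_sub_mul hp δ, ← sum_sub_const_of_sum_eq_one hq δ, Finset.sum_mul]
  gcongr with h
  · linarith [hqδ h]
  · exact hm _

lemma groupConv_le_of_le {M : ℝ} (hq : ∑ h, q h = 1) (hqδ : ∀ h, δ ≤ q h)
    (hp : ∑ g, p g = 1) (hM : ∀ g, p g ≤ M) (g : G) :
    groupConv q p g ≤ δ + (1 - Fintype.card G * δ) * M := by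
  rw [groupConv_eq_add_sum_sub_mul hp δ, ← sum_sub_const_of_sum_eq_one hq δ, Finset.sum_mul]
  gcongr with h
  · linarith [hqδ h]
  · exact hM _

lemma isConvexWeights_of_step {s p : ℕ → G → ℝ} (hs : ∀ t, IsConvexWeights (s t))
    (hp0 : IsConvexWeights (p 0))
    (hstep : ∀ t, p (t + 1) = groupConv (s t) (p t)) : ∀ t, IsConvexWeights (p t)
  | 0 => hp0
  | t + 1 => hstep t ▸ (hs t).groupConv (isConvexWeights_of_step hs hp0 hstep t)

end GroupConv

section Evolution

variable {G : Type*} [Group G] [Fintype G] [DecidableEq G] {s p : ℕ → G → ℝ}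

lemma groupConv_compWeights_zero (s : ℕ → G → ℝ) (t : ℕ) (p : G → ℝ) :
    groupConv (compWeights s t 0) p = p := by
  funext g
  simp [groupConv, compWeights]

lemma isConvexWeights_compWeights (hs : ∀ t, IsConvexWeights (s t)) (t : ℕ) :
    ∀ T, IsConvexWeights (compWeights s t T)
  | 0 => ⟨fun g => by dsimp [compWeights]; positivity, by simp [compWeights]⟩
  | T + 1 => (hs (t + T)).groupConv (isConvexWeights_compWeights hs t T)

lemma eq_groupConv_compWeights_of_step (hstep : ∀ t, p (t + 1) = groupConv (s t) (p t))
    (t : ℕ) : ∀ T, p (t + T) = groupConv (compWeights s t T) (p t)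
  | 0 => (groupConv_compWeights_zero s t (p t)).symm
  | T + 1 => by
    rw [← add_assoc, hstep, eq_groupConv_compWeights_of_step hstep t T, groupConv_assoc]
    rfl

end Evolution

lemma affine_step_geometric {n : ℝ} (hn : n ≠ 0) (δ c : ℝ) (k : ℕ) :
    δ + (1 - n * δ) * (1 / n + c * (1 - n * δ) ^ k) = 1 / n + c * (1 - n * δ) ^ (k + 1) := by
  field_simp
  ring

theorem geometric_bounds_towards_uniform_general
    {G : Type*} [Group G] [Fintype G] [DecidableEq G]
    (T : ℕ)
    (δ : ℝ)
    (s : ℕ → G → ℝ) (hs : ∀ t, IsConvexWeights (s t))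
    (p : ℕ → G → ℝ) (hp0 : IsConvexWeights (p 0))
    (hstep : ∀ t, p (t + 1) = groupConv (s t) (p t))
    (hq : ∀ (t : ℕ) (g : G), δ ≤ compWeights s t T g) :
    ∀ (k : ℕ) (g : G),
      1 / (Fintype.card G : ℝ)
          - 1 / (Fintype.card G : ℝ) * (1 - (Fintype.card G : ℝ) * δ) ^ k
        ≤ p (k * T) g
      ∧ p (k * T) g
        ≤ 1 / (Fintype.card G : ℝ)
          + ((Fintype.card G : ℝ) - 1) / (Fintype.card G : ℝ)
              * (1 - (Fintype.card G : ℝ) * δ) ^ k := by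
  have hn : (Fintype.card G : ℝ) ≠ 0 := by positivity
  have hp := isConvexWeights_of_step hs hp0 hstep
  intro k
  induction k with
  | zero =>
    intro g
    have hsum : 1 / (Fintype.card G : ℝ) + (Fintype.card G - 1) / Fintype.card G = 1 := by
      field_simp; ring
    simp only [zero_mul, pow_zero, mul_one, sub_self, hsum]
    exact ⟨hp0.1 g, hp0.le_one g⟩
  | succ k ih =>
    intro g
    have hqT := (isConvexWeights_compWeights hs (k * T) T).2
    have hlow := le_groupConv_of_le hqT (hq _) (hp _).2 (fun g => (ih g).1) g
    have hupp := groupConv_le_of_le hqT (hq _) (hp _).2 (fun g => (ih g).2) g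
    rw [add_mul, one_mul, eq_groupConv_compWeights_of_step hstep]
    constructor
    · linarith [affine_step_geometric hn δ (-(1 / Fintype.card G)) k]
    · linarith [affine_step_geometric hn δ ((Fintype.card G - 1) / Fintype.card G) k]

theorem geometric_bounds_towards_uniform
    {G : Type*} [Group G] [Fintype G] [DecidableEq G]
    (T : ℕ) (hT : 0 < T)
    (δ : ℝ) (hδ0 : 0 < δ) (hδ1 : δ ≤ 1 / (Fintype.card G : ℝ))
    (s : ℕ → G → ℝ) (hs : ∀ t, IsConvexWeights (s t))
    (p : ℕ → G → ℝ) (hp0 : IsConvexWeights (p 0))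
    (hstep : ∀ t, p (t + 1) = groupConv (s t) (p t))
    (hq : ∀ (t : ℕ) (g : G), δ ≤ compWeights s t T g) :
    ∀ (k : ℕ) (g : G),
      1 / (Fintype.card G : ℝ)
          - 1 / (Fintype.card G : ℝ) * (1 - (Fintype.card G : ℝ) * δ) ^ k
        ≤ p (k * T) g
      ∧ p (k * T) g
        ≤ 1 / (Fintype.card G : ℝ)
          + ((Fintype.card G : ℝ) - 1) / (Fintype.card G : ℝ)
              * (1 - (Fintype.card G : ℝ) * δ) ^ k :=
  geometric_bounds_towards_uniform_general T δ s hs p hp0 hstep hq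
end

section
/- Consider m agents with states x_k(t) ∈ ℝⁿ, k = 1,...,m. Let (j(t), k(t)), t = 0,1,2,..., be a sequence of pairs of distinct indices in {1,...,m} and let α(t) ∈ [α̲, ᾱ] with 0 < α̲ ≤ ᾱ < 1. Define the gossip update: x_{j(t)}(t+1) = x_{j(t)}(t) + α(t)(x_{k(t)}(t) − x_{j(t)}(t)), x_{k(t)}(t+1) = x_{k(t)}(t) + α(t)(x_{j(t)}(t) − x_{k(t)}(t)), and x_ℓ(t+1) = x_ℓ(t) for all other ℓ. Suppose there exists B > 0 such that for every t, the graph on vertex set {1,...,m} whose edge set is {(j(s), k(s)) : t ≤ s ≤ t+B} is connected. Then for every k, lim_{t→∞} x_k(t) = x̄(0), where x̄(0) = (1/m) ∑_{j=1}^m x_j(0) is the average of the initial states. -/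
/-!
The sum of the states is invariant, and the sum `V` of squared distances to the average is a
Lyapunov function: an exchange with gap `g` lowers `V` by `2α(1-α)g²`. Over a window of `B + 1`
steps every exchanged gap is thus at most `√(ΔV / (2a(1-b)))`, where `ΔV` is the drop of `V` over
the window; each agent drifts by at most `B` such gaps, and along paths of the connected window
graph this bounds every deviation from the average, so `V ≤ θ ΔV` for a constant `θ`. As `V` is
antitone and nonnegative it converges, so `ΔV → 0` and hence `V → 0`.
-/

open Finset Filter Topology

theorem norm_add_smul_sub_sq_add_norm_add_smul_sub_sq {E : Type*} [SeminormedAddCommGroup E]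
    [InnerProductSpace ℝ E] (u v : E) (α : ℝ) :
    ‖u + α • (v - u)‖ ^ 2 + ‖v + α • (u - v)‖ ^ 2
      = ‖u‖ ^ 2 + ‖v‖ ^ 2 - 2 * α * (1 - α) * ‖u - v‖ ^ 2 := by
  simp only [← real_inner_self_eq_norm_sq, inner_add_left, inner_add_right, inner_sub_left,
    inner_sub_right, real_inner_smul_left, real_inner_smul_right, real_inner_comm v u]
  ring

theorem tendsto_zero_of_le_mul_sub_add {V : ℕ → ℝ} (hV : Antitone V) (hV0 : ∀ t, 0 ≤ V t)
    {θ : ℝ} {N : ℕ} (h : ∀ t, V t ≤ θ * (V t - V (t + N))) : Tendsto V atTop (𝓝 0) := by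
  have hlim := tendsto_atTop_ciInf hV ⟨0, by rintro _ ⟨t, rfl⟩; exact hV0 t⟩
  have hdrop : Tendsto (fun t => θ * (V t - V (t + N))) atTop (𝓝 0) := by
    simpa using (hlim.sub ((tendsto_add_atTop_iff_nat N).mpr hlim)).const_mul θ
  exact squeeze_zero hV0 h hdrop

namespace SimpleGraph

variable {V X : Type*} [SeminormedAddCommGroup X] {G : SimpleGraph V} {f : V → X} {C : ℝ}

theorem Walk.norm_sub_le_length_mul (hf : ∀ u v, G.Adj u v → ‖f u - f v‖ ≤ C) {u v : V}
    (w : G.Walk u v) : ‖f u - f v‖ ≤ w.length * C := by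
  induction w with
  | nil => simp
  | cons h w ih =>
    calc _ ≤ C + w.length * C :=
          (norm_sub_le_norm_sub_add_norm_sub _ _ _).trans (add_le_add (hf _ _ h) ih)
      _ = _ := by rw [length_cons]; push_cast; ring

theorem Connected.norm_sub_le_card_mul [Fintype V] (hG : G.Connected) (hC : 0 ≤ C)
    (hf : ∀ u v, G.Adj u v → ‖f u - f v‖ ≤ C) (u v : V) :
    ‖f u - f v‖ ≤ Fintype.card V * C := by
  classical
  obtain ⟨w⟩ := hG.preconnected u v
  calc ‖f u - f v‖ ≤ w.toPath.1.length * C := Walk.norm_sub_le_length_mul hf _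
    _ ≤ Fintype.card V * C := by gcongr; exact w.toPath.2.length_lt.le

end SimpleGraph

theorem norm_sub_average_le {ι E : Type*} [Fintype ι] [SeminormedAddCommGroup E]
    [NormedSpace ℝ E] {y : ι → E} {D : ℝ} (h : ∀ p q, ‖y p - y q‖ ≤ D) (l : ι) :
    ‖y l - (Fintype.card ι : ℝ)⁻¹ • ∑ i, y i‖ ≤ D := by
  have hcard : (0 : ℝ) < Fintype.card ι := Nat.cast_pos.mpr (Fintype.card_pos_iff.mpr ⟨l⟩)
  have hdiff : y l - (Fintype.card ι : ℝ)⁻¹ • ∑ i, y i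
      = (Fintype.card ι : ℝ)⁻¹ • ∑ i, (y l - y i) := by
    rw [sum_sub_distrib, smul_sub, sum_const, card_univ, ← Nat.cast_smul_eq_nsmul ℝ, smul_smul,
      inv_mul_cancel₀ hcard.ne', one_smul]
  calc _ = (Fintype.card ι : ℝ)⁻¹ * ‖∑ i, (y l - y i)‖ := by
        rw [hdiff, norm_smul, Real.norm_of_nonneg (inv_nonneg.mpr hcard.le)]
    _ ≤ (Fintype.card ι : ℝ)⁻¹ * (Fintype.card ι * D) := by
        gcongr
        simpa using (norm_sum_le _ _).trans (sum_le_card_nsmul univ _ D fun i _ => h l i)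
    _ = D := by field_simp

section Gossip

variable {ι E : Type*}

structure IsGossipStep [AddCommGroup E] [Module ℝ E] (x y : ι → E) (p q : ι) (α : ℝ) : Prop where
  ne : p ≠ q
  apply_left : y p = x p + α • (x q - x p)
  apply_right : y q = x q + α • (x p - x q)
  apply_of_ne : ∀ l, l ≠ p → l ≠ q → y l = x l

def sumSqDist [Fintype ι] [SeminormedAddCommGroup E] (y : ι → E) (c : E) : ℝ :=
  ∑ l, ‖y l - c‖ ^ 2

section SumSqDist

variable [Fintype ι] [SeminormedAddCommGroup E]

theorem sumSqDist_nonneg (y : ι → E) (c : E) : 0 ≤ sumSqDist y c :=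
  sum_nonneg fun _ _ => sq_nonneg _

theorem norm_sub_le_sqrt_sumSqDist (y : ι → E) (c : E) (l : ι) :
    ‖y l - c‖ ≤ √(sumSqDist y c) :=
  Real.le_sqrt_of_sq_le <| single_le_sum (f := fun l => ‖y l - c‖ ^ 2)
    (fun _ _ => sq_nonneg _) (mem_univ l)

theorem sumSqDist_le_card_mul_sq {y : ι → E} {c : E} {D : ℝ} (h : ∀ l, ‖y l - c‖ ≤ D) :
    sumSqDist y c ≤ Fintype.card ι * D ^ 2 := by
  rw [sumSqDist]
  simpa using sum_le_card_nsmul univ _ _ fun l _ => pow_le_pow_left₀ (norm_nonneg _) (h l) 2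

end SumSqDist

namespace IsGossipStep

variable {x y : ι → E} {p q : ι} {α : ℝ}

theorem sum_eq [Fintype ι] [AddCommGroup E] [Module ℝ E] (h : IsGossipStep x y p q α) :
    ∑ l, y l = ∑ l, x l := by
  rw [← sub_eq_zero, ← sum_sub_distrib,
    sum_eq_add p q h.ne (fun l _ hl => by rw [h.apply_of_ne l hl.1 hl.2, sub_self])
      (absurd (mem_univ _)) (absurd (mem_univ _)), h.apply_left, h.apply_right]
  module

theorem norm_sub_le [SeminormedAddCommGroup E] [NormedSpace ℝ E] (h : IsGossipStep x y p q α)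
    (hα : α ∈ Set.Icc 0 1) (l : ι) : ‖y l - x l‖ ≤ ‖x p - x q‖ := by
  have hmove : ∀ u v : E, ‖u + α • (v - u) - u‖ ≤ ‖u - v‖ := fun u v => by
    rw [add_sub_cancel_left, norm_smul, Real.norm_of_nonneg hα.1, norm_sub_rev]
    exact mul_le_of_le_one_left (norm_nonneg _) hα.2
  by_cases hp : l = p
  · subst hp; rw [h.apply_left]; exact hmove _ _
  by_cases hq : l = q
  · subst hq; rw [h.apply_right, norm_sub_rev (x p)]; exact hmove _ _
  · rw [h.apply_of_ne l hp hq, sub_self, norm_zero]; exact norm_nonneg _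

theorem sumSqDist_eq [Fintype ι] [SeminormedAddCommGroup E] [InnerProductSpace ℝ E]
    (h : IsGossipStep x y p q α) (c : E) :
    sumSqDist y c = sumSqDist x c - 2 * α * (1 - α) * ‖x p - x q‖ ^ 2 := by
  have hdrop : sumSqDist y c - sumSqDist x c
      = (‖y p - c‖ ^ 2 - ‖x p - c‖ ^ 2) + (‖y q - c‖ ^ 2 - ‖x q - c‖ ^ 2) := by
    rw [sumSqDist, sumSqDist, ← sum_sub_distrib]
    exact sum_eq_add p q h.ne (fun l _ hl => by rw [h.apply_of_ne l hl.1 hl.2, sub_self])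
      (absurd (mem_univ _)) (absurd (mem_univ _))
  have key := norm_add_smul_sub_sq_add_norm_add_smul_sub_sq (x p - c) (x q - c) α
  rw [sub_sub_sub_cancel_right, ← add_sub_right_comm, sub_sub_sub_cancel_right,
    ← add_sub_right_comm, ← h.apply_left, ← h.apply_right] at key
  linarith

end IsGossipStep

end Gossip

def windowGraph {ι : Type*} (j k : ℕ → ι) (t B : ℕ) : SimpleGraph ι :=
  SimpleGraph.fromRel fun u v => ∃ s, t ≤ s ∧ s ≤ t + B ∧ j s = u ∧ k s = v

section Trajectory

variable {ι E : Type*} [SeminormedAddCommGroup E] {x : ℕ → ι → E} {j k : ℕ → ι} {α : ℕ → ℝ}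

theorem sum_gossip_eq_sum_zero [Fintype ι] [NormedSpace ℝ E]
    (hstep : ∀ t, IsGossipStep (x t) (x (t + 1)) (j t) (k t) (α t))
    (t : ℕ) : ∑ l, x t l = ∑ l, x 0 l := by
  induction t with
  | zero => rfl
  | succ t ih => rw [(hstep t).sum_eq, ih]

theorem antitone_sumSqDist_gossip [Fintype ι] [InnerProductSpace ℝ E]
    (hstep : ∀ t, IsGossipStep (x t) (x (t + 1)) (j t) (k t) (α t))
    (hα : ∀ t, α t ∈ Set.Icc 0 1) (c : E) : Antitone fun t => sumSqDist (x t) c :=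
  antitone_nat_of_succ_le fun t => by
    have hmix : 0 ≤ α t * (1 - α t) := mul_nonneg (hα t).1 (sub_nonneg.mpr (hα t).2)
    rw [(hstep t).sumSqDist_eq]
    nlinarith [mul_nonneg hmix (sq_nonneg ‖x t (j t) - x t (k t)‖)]

theorem norm_gossip_sub_le_mul [NormedSpace ℝ E]
    (hstep : ∀ t, IsGossipStep (x t) (x (t + 1)) (j t) (k t) (α t))
    (hα : ∀ t, α t ∈ Set.Icc 0 1) {t d : ℕ} {G : ℝ}
    (hG : ∀ s, t ≤ s → s < t + d → ‖x s (j s) - x s (k s)‖ ≤ G) (l : ι) :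
    ‖x (t + d) l - x t l‖ ≤ d * G := by
  rw [← dist_eq_norm, dist_comm]
  simpa using dist_le_Ico_sum_of_dist_le (f := fun s => x s l) (d := fun _ => G)
    (Nat.le_add_right t d) fun {s} hts hsd => by
      rw [dist_comm, dist_eq_norm]; exact ((hstep s).norm_sub_le (hα s) l).trans (hG s hts hsd)

theorem norm_gossip_sub_le_of_connected [Fintype ι] [NormedSpace ℝ E]
    (hstep : ∀ t, IsGossipStep (x t) (x (t + 1)) (j t) (k t) (α t))
    (hα : ∀ t, α t ∈ Set.Icc 0 1) {t B : ℕ} {G : ℝ}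
    (hG : ∀ s, t ≤ s → s ≤ t + B → ‖x s (j s) - x s (k s)‖ ≤ G)
    (hconn : (windowGraph j k t B).Connected) (p q : ι) :
    ‖x t p - x t q‖ ≤ Fintype.card ι * ((2 * B + 1) * G) := by
  have hG0 : 0 ≤ G := (norm_nonneg _).trans (hG t le_rfl (Nat.le_add_right t B))
  have hedge : ∀ s, t ≤ s → s ≤ t + B → ‖x t (j s) - x t (k s)‖ ≤ (2 * B + 1) * G := by
    intro s hts hsB
    obtain ⟨d, rfl⟩ := Nat.exists_eq_add_of_le hts
    have hdrift : ∀ l, ‖x (t + d) l - x t l‖ ≤ B * G := fun l =>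
      (norm_gossip_sub_le_mul hstep hα (fun s hts hsd => hG s hts (by omega)) l).trans
        (by gcongr; exact_mod_cast (by omega : d ≤ B))
    set y := x (t + d)
    set p := j (t + d)
    set q := k (t + d)
    calc ‖x t p - x t q‖ ≤ ‖y p - x t p‖ + ‖y p - y q‖ + ‖y q - x t q‖ := by
          rw [norm_sub_rev (y p)]
          simpa only [dist_eq_norm] using dist_triangle4 (x t p) (y p) (y q) (x t q)
      _ ≤ B * G + G + B * G := by gcongr <;> grind
      _ = (2 * B + 1) * G := by ring
  refine hconn.norm_sub_le_card_mul (by positivity) (fun u v huv => ?_) p q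
  rcases ((SimpleGraph.fromRel_adj _ u v).mp huv).2 with
    ⟨s, hts, hsB, rfl, rfl⟩ | ⟨s, hts, hsB, rfl, rfl⟩
  · exact hedge s hts hsB
  · rw [norm_sub_rev]; exact hedge s hts hsB

theorem sumSqDist_le_mul_drop [Fintype ι] [InnerProductSpace ℝ E]
    (hstep : ∀ t, IsGossipStep (x t) (x (t + 1)) (j t) (k t) (α t)) {a b : ℝ} (ha : 0 < a)
    (hb : b < 1) (hα : ∀ t, α t ∈ Set.Icc a b) {t B : ℕ} (hconn : (windowGraph j k t B).Connected)
    {c : E} (hc : c = (Fintype.card ι : ℝ)⁻¹ • ∑ l, x 0 l) :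
    sumSqDist (x t) c ≤ Fintype.card ι ^ 3 * (2 * B + 1) ^ 2 / (2 * a * (1 - b)) *
      (sumSqDist (x t) c - sumSqDist (x (t + (B + 1))) c) := by
  set V := fun s => sumSqDist (x s) c
  have hα01 : ∀ t, α t ∈ Set.Icc 0 1 := fun t => Set.Icc_subset_Icc ha.le hb.le (hα t)
  have hκ : 0 < 2 * a * (1 - b) := by have := sub_pos.mpr hb; positivity
  set D := V t - V (t + (B + 1))
  have hD : 0 ≤ D / (2 * a * (1 - b)) :=
    div_nonneg (sub_nonneg.mpr (antitone_sumSqDist_gossip hstep hα01 c (by omega))) hκ.le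
  have hgap : ∀ s, t ≤ s → s ≤ t + B → ‖x s (j s) - x s (k s)‖ ≤ √(D / (2 * a * (1 - b))) := by
    intro s hts hsB
    have hmix : a * (1 - b) ≤ α s * (1 - α s) :=
      mul_le_mul (hα s).1 (by linarith [(hα s).2]) (by linarith) (hα01 s).1
    have hstepdrop : V s - V (s + 1) ≤ D := by
      have := antitone_sumSqDist_gossip hstep hα01 c hts
      have := antitone_sumSqDist_gossip hstep hα01 c (by omega : s + 1 ≤ t + (B + 1))
      linarith
    have hVstep : V (s + 1) = V s - 2 * α s * (1 - α s) * ‖x s (j s) - x s (k s)‖ ^ 2 :=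
      (hstep s).sumSqDist_eq _
    rw [Real.le_sqrt (norm_nonneg _) hD, le_div_iff₀ hκ]
    nlinarith [sq_nonneg ‖x s (j s) - x s (k s)‖]
  have hdev : ∀ l, ‖x t l - c‖ ≤ Fintype.card ι * ((2 * B + 1) * √(D / (2 * a * (1 - b)))) := by
    rw [hc, ← sum_gossip_eq_sum_zero hstep t]
    exact norm_sub_average_le (norm_gossip_sub_le_of_connected hstep hα01 hgap hconn)
  calc V t ≤ Fintype.card ι * (Fintype.card ι * ((2 * B + 1) * √(D / (2 * a * (1 - b))))) ^ 2 :=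
        sumSqDist_le_card_mul_sq hdev
    _ = _ := by rw [mul_pow, mul_pow, Real.sq_sqrt hD]; ring

end Trajectory

theorem gossip_converges_to_average_general
    (m n : ℕ)
    (x : ℕ → Fin m → EuclideanSpace ℝ (Fin n))
    (j k : ℕ → Fin m) (hjk : ∀ t, j t ≠ k t)
    (α : ℕ → ℝ) (a b : ℝ) (ha : 0 < a) (hb : b < 1)
    (hα : ∀ t, α t ∈ Set.Icc a b)
    (hupdatej : ∀ t, x (t + 1) (j t) = x t (j t) + α t • (x t (k t) - x t (j t)))
    (hupdatek : ∀ t, x (t + 1) (k t) = x t (k t) + α t • (x t (j t) - x t (k t)))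
    (hfix : ∀ t, ∀ ℓ : Fin m, ℓ ≠ j t → ℓ ≠ k t → x (t + 1) ℓ = x t ℓ)
    (B : ℕ)
    (hconn : ∀ t : ℕ,
      (SimpleGraph.fromRel
        (fun u v => ∃ s : ℕ, t ≤ s ∧ s ≤ t + B ∧ j s = u ∧ k s = v)).Connected) :
    ∀ i : Fin m,
      Filter.Tendsto (fun t => x t i) Filter.atTop
        (nhds ((m : ℝ)⁻¹ • ∑ l : Fin m, x 0 l)) := by
  intro i
  have hstep : ∀ t, IsGossipStep (x t) (x (t + 1)) (j t) (k t) (α t) := fun t =>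
    ⟨hjk t, hupdatej t, hupdatek t, hfix t⟩
  set c := (m : ℝ)⁻¹ • ∑ l : Fin m, x 0 l
  have hV : Tendsto (fun t => sumSqDist (x t) c) atTop (𝓝 0) := by
    refine tendsto_zero_of_le_mul_sub_add (N := B + 1)
      (θ := m ^ 3 * (2 * B + 1) ^ 2 / (2 * a * (1 - b)))
      (antitone_sumSqDist_gossip hstep (fun t => Set.Icc_subset_Icc ha.le hb.le (hα t)) c)
      (fun t => sumSqDist_nonneg _ c) (fun t => ?_)
    simpa only [Fintype.card_fin] using
      sumSqDist_le_mul_drop hstep ha hb hα (hconn t) (by rw [Fintype.card_fin])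
  rw [tendsto_iff_norm_sub_tendsto_zero]
  refine squeeze_zero (fun _ => norm_nonneg _) (fun t => norm_sub_le_sqrt_sumSqDist (x t) c i) ?_
  simpa using hV.sqrt

theorem gossip_converges_to_average
    (m n : ℕ)
    (x : ℕ → Fin m → EuclideanSpace ℝ (Fin n))
    (j k : ℕ → Fin m) (hjk : ∀ t, j t ≠ k t)
    (α : ℕ → ℝ) (a b : ℝ) (ha : 0 < a) (hab : a ≤ b) (hb : b < 1)
    (hα : ∀ t, α t ∈ Set.Icc a b)
    (hupdatej : ∀ t, x (t + 1) (j t) = x t (j t) + α t • (x t (k t) - x t (j t)))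
    (hupdatek : ∀ t, x (t + 1) (k t) = x t (k t) + α t • (x t (j t) - x t (k t)))
    (hfix : ∀ t, ∀ ℓ : Fin m, ℓ ≠ j t → ℓ ≠ k t → x (t + 1) ℓ = x t ℓ)
    (B : ℕ) (hB : 0 < B)
    (hconn : ∀ t : ℕ,
      (SimpleGraph.fromRel
        (fun u v => ∃ s : ℕ, t ≤ s ∧ s ≤ t + B ∧ j s = u ∧ k s = v)).Connected) :
    ∀ i : Fin m,
      Filter.Tendsto (fun t => x t i) Filter.atTop
        (nhds ((m : ℝ)⁻¹ • ∑ l : Fin m, x 0 l)) :=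
  gossip_converges_to_average_general m n x j k hjk α a b ha hb hα hupdatej hupdatek hfix B hconn
end
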